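/- arXiv:2605.15515 — 2 statements merged into one kernel-verified Lean document; each statement's English description precedes it below -/
import Mathlib

section
/- For every n ≥ 1, writing T^{⊠n} = u_n·e1 + v_n·e2 + w_n·e3 ∈ R^3: (i) deg_s v_n = 8n and the coefficient of s^{8n} in v_n has q-degree 2n with leading coefficient 4^n; (ii) deg_s u_n = 8n − 2 and the coefficient of s^{8n−2} in u_n has q-degree 2n with leading coefficient n·4^n; (iii) deg_s w_n ≤ 8n − 2, and if the coefficient of s^{8n−2} in w_n is nonzero then its q-degree is at most 2n − 2. -/
noncomputable section

open LaurentPolynomial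

/-- `ℤ[q^{±1}]`, the ring of Laurent polynomials over `ℤ` in the variable `q`. -/
abbrev Rq : Type := LaurentPolynomial ℤ

/-- `R = ℤ[q^{±1}, s^{±1}]`, realized as Laurent polynomials in `s`
with coefficients in `ℤ[q^{±1}]`. -/
abbrev R2 : Type := LaurentPolynomial Rq

/-- The variable `q` of `R`. -/
def q : R2 := C (T 1)
/-- The inverse `q⁻¹` of the variable `q`. -/
def qi : R2 := C (T (-1))
/-- The variable `s` of `R`. -/
def s : R2 := T 1
/-- The inverse `s⁻¹` of the variable `s`. -/
def si : R2 := T (-1)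

/-- The coefficient of `s^k` in `f`, an element of `ℤ[q^{±1}]`. -/
def sCoeff (f : R2) (k : ℤ) : Rq := AddMonoidAlgebra.coeff f k
/-- The coefficient of `q^k` in `g ∈ ℤ[q^{±1}]`. -/
def qCoeff (g : Rq) (k : ℤ) : ℤ := AddMonoidAlgebra.coeff g k

/-- `deg_s f = d`: the largest exponent of `s` occurring in `f` is `d`. -/
def sDegIs (f : R2) (d : ℤ) : Prop :=
  sCoeff f d ≠ 0 ∧ ∀ k : ℤ, d < k → sCoeff f k = 0

/-- `ldeg_s f = d`: the smallest exponent of `s` occurring in `f` is `d`. -/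
def sLdegIs (f : R2) (d : ℤ) : Prop :=
  sCoeff f d ≠ 0 ∧ ∀ k : ℤ, k < d → sCoeff f k = 0

/-- `g ∈ ℤ[q^{±1}]` has `q`-degree `m` with leading coefficient `c`. -/
def qLeadIs (g : Rq) (m : ℤ) (c : ℤ) : Prop :=
  qCoeff g m = c ∧ c ≠ 0 ∧ ∀ k : ℤ, m < k → qCoeff g k = 0

/-- Vectors in the free module `R^3` with basis `e1, e2, e3`. -/
abbrev V3 : Type := R2 × R2 × R2

/-- `e1 ⊠ e3 = aCoef · e1` where `aCoef = q^{-1}(s − s^{-1})(qs − q^{-1}s^{-1})`. -/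
def aCoef : R2 := qi * (s - si) * (q * s - qi * si)
/-- `e1`-component of `e3 ⊠ e3`. -/
def X1 : R2 := (s^2 + qi^2*si^2) * (1 + qi^2) - 3*qi^2 - qi^4
/-- `e2`-component of `e3 ⊠ e3`. -/
def X2 : R2 := -(s^4 + qi^4*si^4) + (s^2 + qi^2*si^2) * (3 + qi^2) - 2 - 4*qi^2
/-- `e3`-component of `e3 ⊠ e3`. -/
def X3 : R2 := 2*(s^2 + qi^2*si^2) - 3 - qi^2

/-- The commutative bilinear product `⊠` on `R^3` determined by
`e1⊠e1 = 0`, `e1⊠e2 = e1`, `e2⊠e2 = e2`, `e2⊠e3 = e3`, `e1⊠e3 = aCoef·e1`,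
`e3⊠e3 = X1·e1 + X2·e2 + X3·e3`. -/
def boxt (u v : V3) : V3 :=
  (u.1 * v.2.1 + u.2.1 * v.1 + aCoef * (u.1 * v.2.2 + u.2.2 * v.1) + X1 * (u.2.2 * v.2.2),
   u.2.1 * v.2.1 + X2 * (u.2.2 * v.2.2),
   u.2.1 * v.2.2 + u.2.2 * v.2.1 + X3 * (u.2.2 * v.2.2))

/-- First component of `TT⁺`. -/
def TTp1 : R2 :=
  (s^2 + qi^2*si^2) * (1 - 2*qi^2 + 2*qi^4 - 2*qi^6 + 4*qi^8 - 2*qi^10)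
    - 2 + 3*qi^2 - 4*qi^4 + 4*qi^6 - 8*qi^8 + 4*qi^10
/-- Second component of `TT⁺`. -/
def TTp2 : R2 :=
  (s^4 + qi^4*si^4) * (2 - 2*qi^2 - 4*qi^6 + 4*qi^8)
    + (s^2 + qi^2*si^2) * (-5 + 4*qi^2 + 12*qi^6 - 8*qi^8 - 4*qi^10)
    + 4 + 3*qi^2 - 6*qi^4 - 6*qi^6 - 8*qi^8 + 16*qi^10
/-- Third component of `TT⁺`. -/
def TTp3 : R2 :=
  (s^2 + qi^2*si^2) * (2*qi^2 - 2*qi^4 + 2*qi^6 - 4*qi^8 + 2*qi^10)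
    + 1 - 4*qi^2 + 4*qi^4 - 4*qi^6 + 8*qi^8 - 4*qi^10
/-- First component of `TT⁻`. -/
def TTm1 : R2 :=
  (s^2 + qi^2*si^2) * (q^2 - 2 + 2*qi^2 - 2*qi^4 + 4*qi^6 - 2*qi^8)
    - 1 + 4*qi^2 - 4*qi^4 + 4*qi^6 - 8*qi^8 + 4*qi^10
/-- Second component of `TT⁻`. -/
def TTm2 : R2 :=
  (s^4 + qi^4*si^4) * (2*q^2 - 2 - 4*qi^4 + 4*qi^6)
    + (s^2 + qi^2*si^2) * (-3*q^2 - 4 + 8*qi^2 + 4*qi^4 + 8*qi^6 - 12*qi^8)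
    + q^2 + 10 - 6*qi^2 - 6*qi^4 - 16*qi^6 + 8*qi^8 + 8*qi^10
/-- Third component of `TT⁻`. -/
def TTm3 : R2 :=
  (s^2 + qi^2*si^2) * (2 - 2*qi^2 + 2*qi^4 - 4*qi^6 + 2*qi^8)
    - q^2 - 4*qi^2 + 4*qi^4 - 4*qi^6 + 8*qi^8 - 4*qi^10

/-- The vector `TT⁺ = TT⁺_1·e1 + TT⁺_2·e2 + TT⁺_3·e3`. -/
def TTp : V3 := (TTp1, TTp2, TTp3)
/-- The vector `TT⁻ = TT⁻_1·e1 + TT⁻_2·e2 + TT⁻_3·e3`. -/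
def TTm : V3 := (TTm1, TTm2, TTm3)

/-- `T := TT⁺ ⊠ TT⁻`. -/
def Tvec : V3 := boxt TTp TTm

/-- Iterated powers `T^{⊠n}`: `T^{⊠1} = T` and `T^{⊠(n+1)} = T^{⊠n} ⊠ T`.
(`Tpow 0` is set to `e2`, which is a two-sided identity for `⊠`, so that
`Tpow 1 = T` holds definitionally.) -/
def Tpow : ℕ → V3
  | 0 => (0, 1, 0)
  | n + 1 => boxt (Tpow n) Tvec

/-- `AS*(e1)`, the Links–Gould polynomial of the connected sum of two Hopf links. -/
def AS1 : R2 :=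
  (s^6 + qi^6*si^6) - (s^4 + qi^4*si^4) * (1 + qi^2)
    + (s^2 + qi^2*si^2) * (1 + 2*qi^2) - 1 - 2*qi^2 - qi^4
/-- `AS*(e2)`. -/
def AS2 : R2 :=
  (s^4 + qi^4*si^4) - (s^2 + qi^2*si^2) * (2 + 2*qi^2) + 1 + 4*qi^2 + qi^4
/-- `AS*(e3)`. -/
def AS3 : R2 :=
  (s^6 + qi^6*si^6) * (3 + qi^2) - (s^4 + qi^4*si^4) * (7 + 8*qi^2 + qi^4)
    + (s^2 + qi^2*si^2) * (7 + 18*qi^2 + 7*qi^4) - 3 - 18*qi^2 - 17*qi^4 - 2*qi^6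

/-- The `R`-linear map `AS* : R^3 → R`. -/
def ASstar (u : V3) : R2 := u.1 * AS1 + u.2.1 * AS2 + u.2.2 * AS3

/-- `P_n := AS*(T^{⊠n})`, the Links–Gould polynomial of the `n`-th Allen–Swenberg link. -/
def P (n : ℕ) : R2 := ASstar (Tpow n)

/-!
Order monomials `q^j s^k` lexicographically, `s`-degree first. The structure constants of `⊠` and
the components of `TT±` are combinations of `σ_k = s^k + q^{-k}s^{-k}` with coefficients in
`ℤ[q^{±1}]`, so their leading terms come from the top `σ`-coefficient. This gives `T` the leading
terms `4q²s⁸` in `v` and `4q²s⁶` in `u`, while `w` has `s`-degree `6` with top coefficient of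
`q`-degree at most `0`. In `T^{⊠(n+1)} = T^{⊠n} ⊠ T` the leading coefficients `c_v, c_u` of
`q^{2n}s^{8n}` in `v` and of `q^{2n}s^{8n-2}` in `u` thus become `4c_v` and `4c_u + 4c_v`: every
other product, in particular each one involving `w` (whose top coefficient lags two `q`-degrees
behind) or the constants of `e1 ⊠ e3` and `e3 ⊠ e3`, is lower in `s` or in `q`.
-/

namespace LaurentPolynomial

variable {R : Type*} [Semiring R]

/-- `f.degree ≤ d`, stated coefficientwise. -/
def DegLE (f : R[T;T⁻¹]) (d : ℤ) : Prop := ∀ k, d < k → f.coeff k = 0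

def HasLead (f : R[T;T⁻¹]) (m : ℤ) (c : R) : Prop := DegLE f m ∧ f.coeff m = c

namespace DegLE

variable {f g : R[T;T⁻¹]} {d e : ℤ}

theorem le_of_mem_support (hf : DegLE f d) {k : ℤ} (hk : k ∈ f.coeff.support) : k ≤ d :=
  not_lt.1 fun h => Finsupp.mem_support_iff.1 hk (hf k h)

theorem mono (hf : DegLE f d) (hde : d ≤ e) : DegLE f e :=
  fun k hk => hf k (hde.trans_lt hk)

theorem add (hf : DegLE f d) (hg : DegLE g d) : DegLE (f + g) d :=
  fun k hk => by simp [AddMonoidAlgebra.coeff_add, hf k hk, hg k hk]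

theorem mul (hf : DegLE f d) (hg : DegLE g e) : DegLE (f * g) (d + e) := by
  classical
  intro k hk
  rw [AddMonoidAlgebra.coeff_mul]
  refine Finset.sum_eq_zero fun i hi => Finset.sum_eq_zero fun j hj => if_neg ?_
  have := hf.le_of_mem_support hi
  have := hg.le_of_mem_support hj
  omega

end DegLE

theorem coeff_mul_add_eq_of_degLE {f g : R[T;T⁻¹]} {d e : ℤ} (hf : DegLE f d) (hg : DegLE g e) :
    (f * g).coeff (d + e) = f.coeff d * g.coeff e := by
  classical
  rw [AddMonoidAlgebra.coeff_mul, Finsupp.sum, Finset.sum_eq_single d]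
  · rw [Finsupp.sum, Finset.sum_eq_single e, if_pos rfl]
    · intro j hj hje
      have := hg.le_of_mem_support hj
      exact if_neg (by omega)
    · intro he
      rw [Finsupp.notMem_support_iff.1 he, mul_zero, ite_self]
  · intro i hi hid
    refine Finset.sum_eq_zero fun j hj => if_neg ?_
    have := hf.le_of_mem_support hi
    have := hg.le_of_mem_support hj
    omega
  · intro hd
    simp [Finsupp.notMem_support_iff.1 hd]

theorem degLE_C_mul_T (a : R) (n : ℤ) : DegLE (C a * T n) n := fun k hk => by
  rw [← single_eq_C_mul_T, AddMonoidAlgebra.coeff_single, Finsupp.single_apply, if_neg hk.ne]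

theorem hasLead_T (n : ℤ) : HasLead (T n : R[T;T⁻¹]) n 1 := by
  refine ⟨fun k hk => ?_, by simp⟩
  simp [hk.ne]

theorem hasLead_C (a : R) : HasLead (C a) 0 a := by
  refine ⟨fun k hk => ?_, by simp⟩
  simp [hk.ne']

@[simp] theorem coeff_one (k : ℤ) : (1 : R[T;T⁻¹]).coeff k = if k = 0 then 1 else 0 := by
  rw [← map_one C, C_apply]

@[simp] theorem coeff_ofNat_mul (n : ℕ) [n.AtLeastTwo] (f : R[T;T⁻¹]) (k : ℤ) :
    ((ofNat(n) : R[T;T⁻¹]) * f).coeff k = ofNat(n) * f.coeff k := by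
  rw [← map_ofNat C, ← single_eq_C, AddMonoidAlgebra.coeff_single_zero_mul]

/-- Bounds on the leading term of `f` for the lexicographic order, outer variable first. -/
def BiDegLE (f : R[T;T⁻¹][T;T⁻¹]) (d m : ℤ) : Prop := DegLE f d ∧ DegLE (f.coeff d) m

def BiLead (f : R[T;T⁻¹][T;T⁻¹]) (d m : ℤ) (c : R) : Prop := DegLE f d ∧ HasLead (f.coeff d) m c

variable {f g : R[T;T⁻¹][T;T⁻¹]} {d e m n : ℤ} {c c' : R}

namespace BiDegLE

theorem zero : BiDegLE (0 : R[T;T⁻¹][T;T⁻¹]) d m := ⟨fun _ _ => rfl, fun _ _ => rfl⟩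

theorem of_degLE_lt (hf : DegLE f e) (hed : e < d) (m : ℤ) : BiDegLE f d m :=
  ⟨hf.mono hed.le, by rw [hf d hed]; exact fun _ _ => rfl⟩

theorem mono (hf : BiDegLE f d m) {d' m' : ℤ} (hd : d ≤ d') (hm : m ≤ m') : BiDegLE f d' m' := by
  rcases hd.lt_or_eq with hd | rfl
  · exact of_degLE_lt hf.1 hd m'
  · exact ⟨hf.1, hf.2.mono hm⟩

theorem add (hf : BiDegLE f d m) (hg : BiDegLE g d m) : BiDegLE (f + g) d m :=
  ⟨hf.1.add hg.1, by rw [AddMonoidAlgebra.coeff_add]; exact hf.2.add hg.2⟩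

theorem mul (hf : BiDegLE f d m) (hg : BiDegLE g e n) : BiDegLE (f * g) (d + e) (m + n) :=
  ⟨hf.1.mul hg.1, by rw [coeff_mul_add_eq_of_degLE hf.1 hg.1]; exact hf.2.mul hg.2⟩

end BiDegLE

namespace BiLead

theorem zero : BiLead (0 : R[T;T⁻¹][T;T⁻¹]) d m 0 := ⟨fun _ _ => rfl, fun _ _ => rfl, rfl⟩

theorem biDegLE (hf : BiLead f d m c) : BiDegLE f d m := ⟨hf.1, hf.2.1⟩

theorem add (hf : BiLead f d m c) (hg : BiLead g d m c') : BiLead (f + g) d m (c + c') := by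
  refine ⟨hf.1.add hg.1, show HasLead (f.coeff d + g.coeff d) m (c + c') from ?_⟩
  exact ⟨hf.2.1.add hg.2.1, by simp [AddMonoidAlgebra.coeff_add, hf.2.2, hg.2.2]⟩

theorem add_lower (hf : BiLead f d m c) (hg : BiDegLE g d n) (hnm : n < m) :
    BiLead (f + g) d m c := by
  simpa only [add_zero] using hf.add ⟨hg.1, hg.2.mono hnm.le, hg.2 m hnm⟩

theorem add_degLE (hf : BiLead f d m c) (hg : DegLE g e) (hed : e < d) : BiLead (f + g) d m c :=
  hf.add_lower (BiDegLE.of_degLE_lt hg hed (m - 1)) (sub_one_lt m)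

theorem mul {D M : ℤ} (hf : BiLead f d m c) (hg : BiLead g e n c') (hD : d + e = D)
    (hM : m + n = M) : BiLead (f * g) D M (c * c') := by
  subst hD hM
  refine ⟨hf.1.mul hg.1, ?_⟩
  rw [coeff_mul_add_eq_of_degLE hf.1 hg.1]
  exact ⟨hf.2.1.mul hg.2.1, by rw [coeff_mul_add_eq_of_degLE hf.2.1 hg.2.1, hf.2.2, hg.2.2]⟩

end BiLead

theorem biLead_T (n : ℤ) : BiLead (T n : R[T;T⁻¹][T;T⁻¹]) n 0 1 := by
  obtain ⟨hT, hT1⟩ := hasLead_T (R := R[T;T⁻¹]) n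
  refine ⟨hT, ?_⟩
  rw [hT1, ← T_zero]
  exact hasLead_T 0

theorem biLead_C {a : R[T;T⁻¹]} {m : ℤ} {c : R} (ha : HasLead a m c) : BiLead (C a) 0 m c := by
  obtain ⟨hC, hC0⟩ := hasLead_C a
  exact ⟨hC, by rwa [hC0]⟩

end LaurentPolynomial

def sigma (k : ℕ) : R2 := s ^ k + qi ^ k * si ^ k

theorem qi_pow (n : ℕ) : qi ^ n = C (T (-n)) := by
  rw [qi, ← map_pow, T_pow]; norm_num

theorem q_pow (n : ℕ) : q ^ n = C (T n) := by
  rw [q, ← map_pow, T_pow]; norm_num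

theorem biLead_sigma {k : ℕ} (hk : 0 < k) : BiLead (sigma k) k 0 1 := by
  have h : sigma k = T k + C (T (-k)) * T (-k) := by simp [sigma, s, si, qi_pow, T_pow]
  rw [h]
  exact (biLead_T _).add_degLE (degLE_C_mul_T _ _) (by omega)

theorem biLead_sigma_mul_C_add_C {k : ℕ} (hk : 0 < k) {a : Rq} {m c : ℤ} (ha : HasLead a m c)
    (b : Rq) : BiLead (sigma k * C a + C b) k m c := by
  simpa only [one_mul] using ((biLead_sigma hk).mul (biLead_C ha) (add_zero _) (zero_add _)).add_degLE
    (hasLead_C b).1 (by omega)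

theorem biDegLE_sigma_mul_C_add_C {k : ℕ} (hk : 0 < k) {a : Rq} {m : ℤ} (ha : DegLE a m)
    (b : Rq) : BiDegLE (sigma k * C a + C b) k m :=
  (biLead_sigma_mul_C_add_C hk ⟨ha, rfl⟩ b).biDegLE

theorem biLead_sigma_mul_C_add_sigma_mul_C_add_C {k j : ℕ} (hj : 0 < j) (hjk : j < k) {a : Rq}
    {m c : ℤ} (ha : HasLead a m c) (b b' : Rq) :
    BiLead (sigma k * C a + sigma j * C b + C b') k m c := by
  simpa only [one_mul] using
    (((biLead_sigma (hj.trans hjk)).mul (biLead_C ha) (add_zero _) (zero_add _)).add_degLE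
      ((biLead_sigma hj).1.mul (hasLead_C b).1) (by omega)).add_degLE (hasLead_C b').1 (by omega)

theorem biLead_TTp1 : BiLead TTp1 2 0 1 := by
  have h : TTp1 = sigma 2 * C (1 - 2 * T (-2) + 2 * T (-4) - 2 * T (-6) + 4 * T (-8) - 2 * T (-10))
      + C (-2 + 3 * T (-2) - 4 * T (-4) + 4 * T (-6) - 8 * T (-8) + 4 * T (-10)) := by
    simp only [TTp1, sigma, qi_pow, map_add, map_sub, map_mul, map_ofNat, map_one, map_neg,
      Nat.cast_ofNat]
    ring
  rw [h]
  refine biLead_sigma_mul_C_add_C two_pos ⟨fun k hk => ?_, by simp⟩ _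
  simp
  split_ifs <;> omega

theorem biLead_TTp2 : BiLead TTp2 4 0 2 := by
  have h : TTp2 = sigma 4 * C (2 - 2 * T (-2) - 4 * T (-6) + 4 * T (-8))
      + sigma 2 * C (-5 + 4 * T (-2) + 12 * T (-6) - 8 * T (-8) - 4 * T (-10))
      + C (4 + 3 * T (-2) - 6 * T (-4) - 6 * T (-6) - 8 * T (-8) + 16 * T (-10)) := by
    simp only [TTp2, sigma, qi_pow, map_add, map_sub, map_mul, map_ofNat, map_neg, Nat.cast_ofNat]
    ring
  rw [h]
  refine biLead_sigma_mul_C_add_sigma_mul_C_add_C two_pos (by norm_num)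
    ⟨fun k hk => ?_, by simp⟩ _ _
  simp [Finsupp.single_apply]
  split_ifs <;> omega

theorem biDegLE_TTp3 : BiDegLE TTp3 2 (-2) := by
  have h : TTp3 = sigma 2 * C (2 * T (-2) - 2 * T (-4) + 2 * T (-6) - 4 * T (-8) + 2 * T (-10))
      + C (1 - 4 * T (-2) + 4 * T (-4) - 4 * T (-6) + 8 * T (-8) - 4 * T (-10)) := by
    simp only [TTp3, sigma, qi_pow, map_add, map_sub, map_mul, map_ofNat, map_one, Nat.cast_ofNat]
    ring
  rw [h]
  refine biDegLE_sigma_mul_C_add_C two_pos (fun k hk => ?_) _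
  simp
  split_ifs <;> omega

theorem biLead_TTm1 : BiLead TTm1 2 2 1 := by
  have h : TTm1 = sigma 2 * C (T 2 - 2 + 2 * T (-2) - 2 * T (-4) + 4 * T (-6) - 2 * T (-8))
      + C (-1 + 4 * T (-2) - 4 * T (-4) + 4 * T (-6) - 8 * T (-8) + 4 * T (-10)) := by
    simp only [TTm1, sigma, qi_pow, q_pow, map_add, map_sub, map_mul, map_ofNat, map_one, map_neg,
      Nat.cast_ofNat]
    ring
  rw [h]
  refine biLead_sigma_mul_C_add_C two_pos ⟨fun k hk => ?_, by simp⟩ _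
  simp [Finsupp.single_apply]
  split_ifs <;> omega

theorem biLead_TTm2 : BiLead TTm2 4 2 2 := by
  have h : TTm2 = sigma 4 * C (2 * T 2 - 2 - 4 * T (-4) + 4 * T (-6))
      + sigma 2 * C (-3 * T 2 - 4 + 8 * T (-2) + 4 * T (-4) + 8 * T (-6) - 12 * T (-8))
      + C (T 2 + 10 - 6 * T (-2) - 6 * T (-4) - 16 * T (-6) + 8 * T (-8) + 8 * T (-10)) := by
    simp only [TTm2, sigma, qi_pow, q_pow, map_add, map_sub, map_mul, map_ofNat, map_neg,
      Nat.cast_ofNat]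
    ring
  rw [h]
  refine biLead_sigma_mul_C_add_sigma_mul_C_add_C two_pos (by norm_num)
    ⟨fun k hk => ?_, by simp⟩ _ _
  simp [Finsupp.single_apply]
  split_ifs <;> omega

theorem biDegLE_TTm3 : BiDegLE TTm3 2 0 := by
  have h : TTm3 = sigma 2 * C (2 - 2 * T (-2) + 2 * T (-4) - 4 * T (-6) + 2 * T (-8))
      + C (-T 2 - 4 * T (-2) + 4 * T (-4) - 4 * T (-6) + 8 * T (-8) - 4 * T (-10)) := by
    simp only [TTm3, sigma, qi_pow, q_pow, map_add, map_sub, map_mul, map_ofNat, map_neg,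
      Nat.cast_ofNat]
    ring
  rw [h]
  refine biDegLE_sigma_mul_C_add_C two_pos (fun k hk => ?_) _
  simp [Finsupp.single_apply]
  split_ifs <;> omega

theorem biDegLE_aCoef : BiDegLE aCoef 2 0 := by
  have hs : s * si = 1 := by rw [s, si, ← T_add]; simp
  have hq : q * qi = 1 := by rw [q, qi, ← map_mul, ← T_add]; simp
  have h : aCoef = sigma 2 * C 1 + C (-1 - T (-2)) := by
    have hqi : C (T (-2)) = qi ^ 2 := by rw [qi_pow]; rfl
    rw [map_sub, map_neg, map_one, hqi, aCoef, sigma]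
    linear_combination (s ^ 2 - s * si) * hq - (qi ^ 2 + 1) * hs
  rw [h]
  refine biDegLE_sigma_mul_C_add_C two_pos (fun k hk => ?_) _
  simp
  omega

theorem biDegLE_X1 : BiDegLE X1 2 0 := by
  have h : X1 = sigma 2 * C (1 + T (-2)) + C (-3 * T (-2) - T (-4)) := by
    simp only [X1, sigma, qi_pow, map_add, map_sub, map_mul, map_ofNat, map_one, map_neg,
      Nat.cast_ofNat]
    ring
  rw [h]
  refine biDegLE_sigma_mul_C_add_C two_pos (fun k hk => ?_) _
  simp
  split_ifs <;> omega

theorem biDegLE_X2 : BiDegLE X2 4 0 := by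
  have h : X2 = sigma 4 * C (-1) + sigma 2 * C (3 + T (-2)) + C (-2 - 4 * T (-2)) := by
    simp only [X2, sigma, qi_pow, map_add, map_sub, map_mul, map_ofNat, map_one, map_neg,
      Nat.cast_ofNat]
    ring
  rw [h]
  refine (biLead_sigma_mul_C_add_sigma_mul_C_add_C two_pos (by norm_num) ⟨fun k hk => ?_, rfl⟩
    _ _).biDegLE
  simp
  omega

theorem biDegLE_X3 : BiDegLE X3 2 0 := by
  have h : X3 = sigma 2 * C 2 + C (-3 - T (-2)) := by
    simp only [X3, sigma, qi_pow, map_sub, map_ofNat, map_neg, Nat.cast_ofNat]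
    ring
  rw [h]
  refine biDegLE_sigma_mul_C_add_C two_pos (fun k hk => ?_) _
  simp [Finsupp.single_apply]
  omega

theorem biLead_Tvec_v : BiLead Tvec.2.1 8 2 4 :=
  (biLead_TTp2.mul biLead_TTm2 (by norm_num) (by norm_num)).add_lower
    (biDegLE_X2.mul (biDegLE_TTp3.mul biDegLE_TTm3)) (by norm_num)

theorem biLead_Tvec_u : BiLead Tvec.1 6 2 4 := by
  have hlead : BiLead (TTp1 * TTm2 + TTp2 * TTm1) 6 2 4 :=
    (biLead_TTp1.mul biLead_TTm2 (by norm_num) (by norm_num)).add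
      (biLead_TTp2.mul biLead_TTm1 (by norm_num) (by norm_num))
  have haCoef : BiDegLE (aCoef * (TTp1 * TTm3 + TTp3 * TTm1)) 6 0 :=
    biDegLE_aCoef.mul ((biLead_TTp1.biDegLE.mul biDegLE_TTm3).add
      (biDegLE_TTp3.mul biLead_TTm1.biDegLE))
  exact (hlead.add_lower haCoef (by norm_num)).add_lower
    (biDegLE_X1.mul (biDegLE_TTp3.mul biDegLE_TTm3)) (by norm_num)

theorem biDegLE_Tvec_w : BiDegLE Tvec.2.2 6 0 :=
  ((biLead_TTp2.biDegLE.mul biDegLE_TTm3).add (biDegLE_TTp3.mul biLead_TTm2.biDegLE)).add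
    ((biDegLE_X3.mul (biDegLE_TTp3.mul biDegLE_TTm3)).mono le_rfl (by norm_num))

structure LeadingTerms (x : V3) (d m cv cu : ℤ) : Prop where
  v : BiLead x.2.1 d m cv
  u : BiLead x.1 (d - 2) m cu
  w : BiDegLE x.2.2 (d - 2) (m - 2)

theorem leadingTerms_e2 : LeadingTerms (0, 1, 0) 0 0 1 0 :=
  ⟨by simpa only [T_zero] using biLead_T (R := ℤ) 0, BiLead.zero, BiDegLE.zero⟩

theorem LeadingTerms.boxt_Tvec {x : V3} {d m cv cu : ℤ} (h : LeadingTerms x d m cv cu) :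
    LeadingTerms (boxt x Tvec) (d + 8) (m + 2) (cv * 4) (cu * 4 + cv * 4) := by
  obtain ⟨hv, hu, hw⟩ := h
  have hww : BiDegLE (x.2.2 * Tvec.2.2) (d + 4) (m - 2) :=
    (hw.mul biDegLE_Tvec_w).mono (by omega) (by omega)
  refine ⟨?_, ?_, ?_⟩
  · exact (hv.mul biLead_Tvec_v rfl rfl).add_lower
      ((biDegLE_X2.mul hww).mono (by omega) le_rfl) (by omega)
  · have hlead : BiLead (x.1 * Tvec.2.1 + x.2.1 * Tvec.1) (d + 8 - 2) (m + 2) (cu * 4 + cv * 4) :=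
      (hu.mul biLead_Tvec_v (by ring) rfl).add (hv.mul biLead_Tvec_u (by ring) rfl)
    have haCoef : BiDegLE (aCoef * (x.1 * Tvec.2.2 + x.2.2 * Tvec.1)) (d + 8 - 2) m :=
      (biDegLE_aCoef.mul ((hu.biDegLE.mul biDegLE_Tvec_w).add
        ((hw.mul biLead_Tvec_u.biDegLE).mono le_rfl (by omega)))).mono (by omega) (by omega)
    exact (hlead.add_lower haCoef (by omega)).add_lower
      ((biDegLE_X1.mul hww).mono (by omega) le_rfl) (by omega)
  · exact (((hv.biDegLE.mul biDegLE_Tvec_w).mono (by omega) (by omega)).add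
      ((hw.mul biLead_Tvec_v.biDegLE).mono (by omega) (by omega))).add
      ((biDegLE_X3.mul hww).mono (by omega) (by omega))

theorem leadingTerms_Tpow (n : ℕ) : LeadingTerms (Tpow n) (8 * n) (2 * n) (4 ^ n) (n * 4 ^ n) := by
  induction n with
  | zero => simpa [Tpow] using leadingTerms_e2
  | succ n ih =>
    convert ih.boxt_Tvec using 1
    · rfl
    all_goals push_cast; ring

theorem LaurentPolynomial.BiLead.sDegIs_qLeadIs {f : R2} {d m c : ℤ} (h : BiLead f d m c) (hc : c ≠ 0) :
    sDegIs f d ∧ qLeadIs (sCoeff f d) m c :=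
  ⟨⟨fun h0 => hc <| by rw [← h.2.2, show f.coeff d = 0 from h0]; rfl, h.1⟩, h.2.2, hc, h.2.1⟩

/-- leading terms of the components `u_n, v_n, w_n` of `T^{⊠n}`. -/
theorem leading_terms_of_Tpow :
    ∀ n : ℕ, 1 ≤ n →
      -- (i) `deg_s v_n = 8n`, coefficient of `s^{8n}` has `q`-degree `2n`, leading coeff `4ⁿ`
      (sDegIs (Tpow n).2.1 (8 * n) ∧
        qLeadIs (sCoeff (Tpow n).2.1 (8 * n)) (2 * n) (4 ^ n)) ∧
      -- (ii) `deg_s u_n = 8n − 2`, coefficient of `s^{8n−2}` has `q`-degree `2n`,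
      -- leading coeff `n·4ⁿ`
      (sDegIs (Tpow n).1 (8 * n - 2) ∧
        qLeadIs (sCoeff (Tpow n).1 (8 * n - 2)) (2 * n) (n * 4 ^ n)) ∧
      -- (iii) `deg_s w_n ≤ 8n − 2`, and if the coefficient of `s^{8n−2}` in `w_n` is
      -- nonzero then its `q`-degree is at most `2n − 2`
      ((∀ k : ℤ, 8 * n - 2 < k → sCoeff (Tpow n).2.2 k = 0) ∧
        (sCoeff (Tpow n).2.2 (8 * n - 2) ≠ 0 →
          ∀ k : ℤ, 2 * n - 2 < k → qCoeff (sCoeff (Tpow n).2.2 (8 * n - 2)) k = 0)) := by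
  intro n hn
  have h := leadingTerms_Tpow n
  exact ⟨h.v.sDegIs_qLeadIs (by positivity),
    h.u.sDegIs_qLeadIs (mul_pos (by exact_mod_cast hn) (by positivity)).ne', h.w.1, fun _ => h.w.2⟩
end
end

section
/- For every n ≥ 1, φ(P_n) = P_n; that is, the Links–Gould polynomial LG_{AS(n)}(s,q) of each Allen–Swenberg link is invariant under the substitution s ↦ q^{-1}s^{-1}. -/
noncomputable section

open LaurentPolynomial

/-! The automorphism fixes `q` and every symmetric combination `σₖ = s^k + q^{-k}s^{-k}`. All
structure constants of `⊠`, the entries of `TT⁺`, `TT⁻` and the values of `AS*` are polynomials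
in `q^{±1}` and the `σₖ` (for `e1 ⊠ e3` because `aCoef = σ₂ - 1 - q^{-2}`), so `φ`, applied
coordinatewise, commutes with `⊠`, fixes `T` and hence every `T^{⊠n}`, and commutes with `AS*`. -/

theorem q_mul_qi : q * qi = 1 := by
  rw [q, qi, ← map_mul, ← T_add]
  norm_num

theorem s_mul_si : s * si = 1 := by
  rw [s, si, ← T_add]
  norm_num

theorem aCoef_eq : aCoef = (s^2 + qi^2*si^2) - 1 - qi^2 := by
  rw [aCoef]
  linear_combination (s^2 - s*si) * q_mul_qi - (qi^2 + 1) * s_mul_si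

def mapV3 {F : Type*} [FunLike F R2 R2] (φ : F) : V3 → V3 :=
  Prod.map φ (Prod.map φ φ)

section Involution

variable {F : Type*} [FunLike F R2 R2] [RingHomClass F R2 R2] {φ : F}
  (hq : φ q = q) (hs : φ s = qi * si)

include hq in
theorem map_qi : φ qi = qi := by
  have hφ : q * φ qi = 1 := by rw [← hq, ← map_mul, q_mul_qi, map_one]
  linear_combination qi * hφ - φ qi * q_mul_qi

include hs in
theorem map_si : φ si = q * s := by
  have hφ : qi * si * φ si = 1 := by rw [← hs, ← map_mul, s_mul_si, map_one]
  linear_combination q * s * hφ - φ si * s * si * q_mul_qi - φ si * s_mul_si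

include hq hs

theorem map_sym_pow (k : ℕ) : φ (s^k + qi^k*si^k) = s^k + qi^k*si^k := by
  rw [map_add, map_mul, map_pow, map_pow, map_pow, hs, map_qi hq, map_si hs, mul_pow, mul_pow,
    ← mul_assoc, ← mul_pow qi q, mul_comm qi q, q_mul_qi, one_pow, one_mul, add_comm]

-- `↓` makes `map_sym_pow` fire on `φ σₖ` before `map_add` splits it.
theorem map_aCoef : φ aCoef = aCoef := by
  simp only [aCoef_eq, ↓map_sym_pow hq hs, map_sub, map_pow, map_one, map_qi hq]

theorem map_X1 : φ X1 = X1 := by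
  simp only [X1, ↓map_sym_pow hq hs, map_add, map_sub, map_mul, map_pow, map_one, map_ofNat,
    map_qi hq]

theorem map_X2 : φ X2 = X2 := by
  simp only [X2, ↓map_sym_pow hq hs, map_add, map_sub, map_mul, map_pow, map_neg, map_ofNat,
    map_qi hq]

theorem map_X3 : φ X3 = X3 := by
  simp only [X3, ↓map_sym_pow hq hs, map_sub, map_mul, map_pow, map_ofNat, map_qi hq]

theorem mapV3_boxt (u v : V3) : mapV3 φ (boxt u v) = boxt (mapV3 φ u) (mapV3 φ v) := by
  simp only [mapV3, boxt, Prod.map, map_add, map_mul, map_aCoef hq hs, map_X1 hq hs,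
    map_X2 hq hs, map_X3 hq hs]

theorem mapV3_TTp : mapV3 φ TTp = TTp := by
  simp only [mapV3, TTp, TTp1, TTp2, TTp3, Prod.map, ↓map_sym_pow hq hs, map_add, map_sub,
    map_mul, map_pow, map_neg, map_one, map_ofNat, map_qi hq]

theorem mapV3_TTm : mapV3 φ TTm = TTm := by
  simp only [mapV3, TTm, TTm1, TTm2, TTm3, Prod.map, ↓map_sym_pow hq hs, map_add, map_sub,
    map_mul, map_pow, map_neg, map_one, map_ofNat, hq, map_qi hq]

theorem mapV3_Tvec : mapV3 φ Tvec = Tvec := by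
  rw [Tvec, mapV3_boxt hq hs, mapV3_TTp hq hs, mapV3_TTm hq hs]

theorem mapV3_Tpow (n : ℕ) : mapV3 φ (Tpow n) = Tpow n := by
  induction n with
  | zero => simp only [mapV3, Tpow, Prod.map, map_zero, map_one]
  | succ n ih => rw [Tpow, mapV3_boxt hq hs, ih, mapV3_Tvec hq hs]

theorem map_ASstar (u : V3) : φ (ASstar u) = ASstar (mapV3 φ u) := by
  simp only [ASstar, AS1, AS2, AS3, mapV3, Prod.map, ↓map_sym_pow hq hs, map_add, map_sub,
    map_mul, map_pow, map_one, map_ofNat, map_qi hq]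

end Involution

/-- for every `n ≥ 1`, `φ(P_n) = P_n`: the Links–Gould polynomial
`LG_{AS(n)}(s,q)` is invariant under the substitution `s ↦ q⁻¹s⁻¹`. -/
theorem P_invariant_under_involution (φ : R2 ≃+* R2)
    (hq : φ q = q) (hs : φ s = qi * si) :
    ∀ n : ℕ, 1 ≤ n → φ (P n) = P n := by
  intro n _
  rw [P, map_ASstar hq hs, mapV3_Tpow hq hs]
end
end
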